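/- Let G be a graph, u and v distinct vertices of G, and let (G', B) be the biased graph obtained by identifying u and v to a single vertex w and declaring a cycle of G' balanced exactly when it does not use both an edge formerly incident to u and an edge formerly incident to v. Then F(G', B) = M(G), the cycle matroid of G. -/

import Mathlib

/-! Common definitions: multigraphs, walks, biased graphs, frame matroids. -/

universe u v

structure Multigraph (V : Type u) (E : Type v) where
  inc : E → Sym2 V

namespace Multigraph

variable {V : Type u} {E : Type v}

/-- An edge is a loop if its two endpoints coincide. -/
def IsLoop (G : Multigraph V E) (e : E) : Prop := (G.inc e).IsDiag

/-- The set of links (non-loop edges) incident to a vertex. -/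
def delta (G : Multigraph V E) (x : V) : Set E := {e | x ∈ G.inc e ∧ ¬ G.IsLoop e}

/-- The set of all edges (including loops) incident to a vertex. -/
def deltaPlus (G : Multigraph V E) (x : V) : Set E := {e | x ∈ G.inc e}

/-- The set of vertices incident with an edge of `X`. -/
def VSet (G : Multigraph V E) (X : Set E) : Set V := {x | ∃ e ∈ X, x ∈ G.inc e}

/-- Walks in a multigraph. -/
inductive Walk (G : Multigraph V E) : V → V → Type (max u v) where
  | nil (x : V) : Walk G x x
  | cons {x y z : V} (e : E) (h : G.inc e = s(x, y)) (t : Walk G y z) : Walk G x z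

namespace Walk

variable {G : Multigraph V E}

/-- The list of edges of a walk. -/
def edgeList : {x y : V} → G.Walk x y → List E
  | _, _, .nil _ => []
  | _, _, .cons e _ t => e :: t.edgeList

/-- The list of vertices of a walk (both endpoints included). -/
def vertList : {x y : V} → G.Walk x y → List V
  | _, _, .nil a => [a]
  | a, _, .cons _ _ t => a :: t.vertList

/-- The edge set of a walk. -/
def edgeSet {x y : V} (w : G.Walk x y) : Set E := {e | e ∈ w.edgeList}

/-- A walk is a path if it repeats no vertex. -/
def IsPath {x y : V} (w : G.Walk x y) : Prop := w.vertList.Nodup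

/-- A closed walk is a cycle if it is nonempty, repeats no edge and repeats
no vertex except for its starting vertex.  (A loop gives a cycle of length one.) -/
def IsCycle {x : V} (w : G.Walk x x) : Prop :=
  w.edgeList ≠ [] ∧ w.edgeList.Nodup ∧ w.vertList.dropLast.Nodup

end Walk

/-- `P` is the edge set of a path from `x` to `y`. -/
def IsPathSet (G : Multigraph V E) (x y : V) (P : Set E) : Prop :=
  ∃ w : G.Walk x y, w.IsPath ∧ w.edgeSet = P

/-- `C` is the edge set of a cycle. -/
def IsCycleSet (G : Multigraph V E) (C : Set E) : Prop :=
  ∃ (x : V) (w : G.Walk x x), w.IsCycle ∧ w.edgeSet = C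

/-- Two vertices are connected using only edges of `X`. -/
def ConnectedTo (G : Multigraph V E) (X : Set E) (x y : V) : Prop :=
  ∃ w : G.Walk x y, w.edgeSet ⊆ X

/-- A multigraph is connected if any two vertices are joined by a walk. -/
def ConnectedGraph (G : Multigraph V E) : Prop := ∀ x y : V, Nonempty (G.Walk x y)

/-- The subgraph induced by an edge set `X` is connected. -/
def SubConnected (G : Multigraph V E) (X : Set E) : Prop :=
  ∀ e ∈ X, ∀ f ∈ X, ∃ x y, x ∈ G.inc e ∧ y ∈ G.inc f ∧ G.ConnectedTo X x y

/-- A theta subgraph: two distinct vertices joined by three internally disjoint paths. -/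
def IsTheta (G : Multigraph V E) (x y : V) (P₁ P₂ P₃ : Set E) : Prop :=
  x ≠ y ∧ G.IsPathSet x y P₁ ∧ G.IsPathSet x y P₂ ∧ G.IsPathSet x y P₃ ∧
    Disjoint P₁ P₂ ∧ Disjoint P₂ P₃ ∧ Disjoint P₁ P₃ ∧
    G.VSet P₁ ∩ G.VSet P₂ ⊆ {x, y} ∧ G.VSet P₂ ∩ G.VSet P₃ ⊆ {x, y} ∧
    G.VSet P₁ ∩ G.VSet P₃ ⊆ {x, y}

/-- A proper separation of a multigraph, given as a partition of the edge set:
each side must contain a vertex not met by the other side. -/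
def IsProperSep (G : Multigraph V E) (X Y : Set E) : Prop :=
  X ∪ Y = Set.univ ∧ Disjoint X Y ∧
    (G.VSet X \ G.VSet Y).Nonempty ∧ (G.VSet Y \ G.VSet X).Nonempty

/-- A multigraph is `k`-connected if it is connected and every proper separation
has order at least `k`. -/
def KConnected (G : Multigraph V E) (k : ℕ) : Prop :=
  G.ConnectedGraph ∧ ∀ X Y : Set E, G.IsProperSep X Y → k ≤ (G.VSet X ∩ G.VSet Y).ncard

/-- The connected component of the edge `e` in the subgraph induced by `X`. -/
def edgeComponent (G : Multigraph V E) (X : Set E) (e : E) : Set E :=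
  {f | f ∈ X ∧ ∃ x y, x ∈ G.inc e ∧ y ∈ G.inc f ∧ G.ConnectedTo X x y}

/-- The set of connected components (as edge sets) of the subgraph induced by `X`. -/
def components (G : Multigraph V E) (X : Set E) : Set (Set E) :=
  {D | ∃ e ∈ X, D = G.edgeComponent X e}

/-- One step of rerouting a `u`-`v` path: replace a subpath `R` (with endpoints `x,y`)
of `P` by an `x`-`y` path `Q` that is internally disjoint from `P`. -/
def RerouteStep (G : Multigraph V E) (u v : V) (P P' : Set E) : Prop :=
  G.IsPathSet u v P ∧ G.IsPathSet u v P' ∧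
    ∃ x y R Q, G.IsPathSet x y R ∧ G.IsPathSet x y Q ∧ R ⊆ P ∧
      Disjoint Q (P \ R) ∧ G.VSet Q ∩ G.VSet P ⊆ {x, y} ∧ P' = (P \ R) ∪ Q

end Multigraph

/-- A biased graph: a multigraph together with a collection of balanced cycles
satisfying the theta property. -/
structure BiasedGraph (V : Type u) (E : Type v) extends Multigraph V E where
  Balanced : Set E → Prop
  balanced_isCycle : ∀ C, Balanced C → toMultigraph.IsCycleSet C
  theta_property : ∀ x y P₁ P₂ P₃, toMultigraph.IsTheta x y P₁ P₂ P₃ →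
    Balanced (P₁ ∪ P₂) → Balanced (P₂ ∪ P₃) → Balanced (P₁ ∪ P₃)

namespace BiasedGraph

variable {V : Type u} {E : Type v}

/-- A balancing vertex: every unbalanced cycle passes through it. -/
def BalancingVertex (Ω : BiasedGraph V E) (u : V) : Prop :=
  ∀ C, Ω.toMultigraph.IsCycleSet C → ¬ Ω.Balanced C → ∃ e ∈ C, u ∈ Ω.inc e

/-- `C` is an unbalanced cycle of `Ω`. -/
def IsUnbalancedCycle (Ω : BiasedGraph V E) (C : Set E) : Prop :=
  Ω.toMultigraph.IsCycleSet C ∧ ¬ Ω.Balanced C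

/-- Every cycle contained in `X` is balanced. -/
def BalancedSub (Ω : BiasedGraph V E) (X : Set E) : Prop :=
  ∀ C ⊆ X, Ω.toMultigraph.IsCycleSet C → Ω.Balanced C

/-- `e ~ f`: either `e = f` or some balanced cycle contains both. -/
def LinkRel (Ω : BiasedGraph V E) (e f : E) : Prop :=
  e = f ∨ ∃ C, Ω.toMultigraph.IsCycleSet C ∧ Ω.Balanced C ∧ e ∈ C ∧ f ∈ C

/-- The same relation, with the balanced cycle restricted to lie inside `A`. -/
def LinkRelIn (Ω : BiasedGraph V E) (A : Set E) (e f : E) : Prop :=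
  e = f ∨ ∃ C, C ⊆ A ∧ Ω.toMultigraph.IsCycleSet C ∧ Ω.Balanced C ∧ e ∈ C ∧ f ∈ C

/-- `S` is an unbalancing class of `delta u`: a (nonempty) equivalence class of `~`. -/
def IsUnbalancingClass (Ω : BiasedGraph V E) (u : V) (S : Set E) : Prop :=
  S.Nonempty ∧ S ⊆ Ω.toMultigraph.delta u ∧
    ∀ e ∈ S, ∀ f ∈ Ω.toMultigraph.delta u, (f ∈ S ↔ Ω.LinkRel e f)

/-- `delta u` has exactly three unbalancing classes within the edge set `A`. -/
def HasThreeClassesIn (Ω : BiasedGraph V E) (u : V) (A : Set E) : Prop :=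
  ∃ e₁ e₂ e₃, e₁ ∈ Ω.toMultigraph.delta u ∩ A ∧ e₂ ∈ Ω.toMultigraph.delta u ∩ A ∧
    e₃ ∈ Ω.toMultigraph.delta u ∩ A ∧
    ¬ Ω.LinkRelIn A e₁ e₂ ∧ ¬ Ω.LinkRelIn A e₁ e₃ ∧ ¬ Ω.LinkRelIn A e₂ e₃ ∧
    ∀ f ∈ Ω.toMultigraph.delta u ∩ A,
      Ω.LinkRelIn A f e₁ ∨ Ω.LinkRelIn A f e₂ ∨ Ω.LinkRelIn A f e₃

/-- Tight handcuffs: two unbalanced cycles meeting in exactly one vertex. -/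
def IsTightHandcuff (Ω : BiasedGraph V E) (X : Set E) : Prop :=
  ∃ C₁ C₂, Ω.IsUnbalancedCycle C₁ ∧ Ω.IsUnbalancedCycle C₂ ∧ Disjoint C₁ C₂ ∧
    (∃ x, Ω.toMultigraph.VSet C₁ ∩ Ω.toMultigraph.VSet C₂ = {x}) ∧ X = C₁ ∪ C₂

/-- Loose handcuffs: two vertex-disjoint unbalanced cycles joined by a path meeting
each cycle only in an endpoint. -/
def IsLooseHandcuff (Ω : BiasedGraph V E) (X : Set E) : Prop :=
  ∃ C₁ C₂ P x y, Ω.IsUnbalancedCycle C₁ ∧ Ω.IsUnbalancedCycle C₂ ∧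
    Disjoint (Ω.toMultigraph.VSet C₁) (Ω.toMultigraph.VSet C₂) ∧
    Ω.toMultigraph.IsPathSet x y P ∧ Disjoint P (C₁ ∪ C₂) ∧
    Ω.toMultigraph.VSet P ∩ Ω.toMultigraph.VSet C₁ = {x} ∧
    Ω.toMultigraph.VSet P ∩ Ω.toMultigraph.VSet C₂ = {y} ∧ X = C₁ ∪ C₂ ∪ P

/-- A contrabalanced theta: a theta subgraph all three of whose cycles are unbalanced. -/
def IsContraTheta (Ω : BiasedGraph V E) (X : Set E) : Prop :=
  ∃ x y P₁ P₂ P₃, Ω.toMultigraph.IsTheta x y P₁ P₂ P₃ ∧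
    ¬ Ω.Balanced (P₁ ∪ P₂) ∧ ¬ Ω.Balanced (P₂ ∪ P₃) ∧ ¬ Ω.Balanced (P₁ ∪ P₃) ∧
    X = P₁ ∪ P₂ ∪ P₃

/-- The circuits of the frame matroid of a biased graph. -/
def FrameCircuit (Ω : BiasedGraph V E) (X : Set E) : Prop :=
  (Ω.toMultigraph.IsCycleSet X ∧ Ω.Balanced X) ∨ Ω.IsTightHandcuff X ∨
    Ω.IsLooseHandcuff X ∨ Ω.IsContraTheta X

/-- The number of balanced components of the subgraph induced by `X`. -/
noncomputable def numBalComponents (Ω : BiasedGraph V E) (X : Set E) : ℕ :=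
  {D | D ∈ Ω.toMultigraph.components X ∧ Ω.BalancedSub D}.ncard

end BiasedGraph

section MatroidDefs

variable {α : Type*}

/-- A circuit of a matroid: a minimal dependent set. -/
def MCircuit (M : Matroid α) (C : Set α) : Prop :=
  C ⊆ M.E ∧ ¬ M.Indep C ∧ ∀ D ⊂ C, M.Indep D

/-- A hyperplane: a maximal proper flat. -/
def MHyperplane (M : Matroid α) (H : Set α) : Prop :=
  M.IsFlat H ∧ H ≠ M.E ∧ ∀ F, M.IsFlat F → H ⊆ F → F = H ∨ F = M.E

/-- A cocircuit: a circuit of the dual matroid. -/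
def MCocircuit (M : Matroid α) (K : Set α) : Prop := MCircuit (Matroid.dual M) K

open scoped Matroid in
/-- Deletion of a set of elements. -/
def MDelete (M : Matroid α) (D : Set α) : Matroid α := M ↾ (M.E \ D)

/-- Contraction of a set of elements. -/
def MContract (M : Matroid α) (C : Set α) : Matroid α :=
  Matroid.dual (MDelete (Matroid.dual M) C)

/-- `N` is a minor of `M`. -/
def IsMinorOf (N M : Matroid α) : Prop := ∃ C D, N = MDelete (MContract M C) D

/-- The rank of a set in a matroid (junk value if unbounded). -/
noncomputable def mRank (M : Matroid α) (X : Set α) : ℕ :=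
  sSup {n : ℕ | ∃ I, M.Indep I ∧ I ⊆ X ∧ I.ncard = n}

/-- A matroid is connected if any two elements lie on a common circuit. -/
def MatroidConnected (M : Matroid α) : Prop :=
  M.E.Nonempty ∧ ∀ e ∈ M.E, ∀ f ∈ M.E, e = f ∨ ∃ C, MCircuit M C ∧ e ∈ C ∧ f ∈ C

/-- A `k`-separation of a matroid. -/
def MatroidKSeparation (M : Matroid α) (X Y : Set α) (k : ℕ) : Prop :=
  X ∪ Y = M.E ∧ Disjoint X Y ∧ k ≤ X.ncard ∧ k ≤ Y.ncard ∧
    mRank M X + mRank M Y + 1 = mRank M M.E + k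

/-- A matroid is 3-connected if it has no `k`-separation for `k < 3`. -/
def Matroid3Connected (M : Matroid α) : Prop :=
  ∀ X Y (k : ℕ), k ≤ 2 → ¬ MatroidKSeparation M X Y k

/-- A matroid is graphic if its circuits are exactly the cycles of some multigraph. -/
def IsGraphic (M : Matroid α) : Prop :=
  ∃ (W : Type) (G : Multigraph W α), ∀ C, MCircuit M C ↔ G.IsCycleSet C

/-- A matroid has a `U_{2,4}` minor. -/
def HasU24Minor (M : Matroid α) : Prop :=
  ∃ N : Matroid α, IsMinorOf N M ∧ N.E.ncard = 4 ∧
    ∀ C, MCircuit N C ↔ C ⊆ N.E ∧ C.ncard = 3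

end MatroidDefs

/-- `M` is the frame matroid of the biased graph `Ω` (on ground set all of `E`). -/
def IsFrameMatroidOf {V E : Type*} (M : Matroid E) (Ω : BiasedGraph V E) : Prop :=
  M.E = Set.univ ∧ ∀ C, MCircuit M C ↔ Ω.FrameCircuit C

open scoped Matroid in
/-- A vertex is committed: the complement of its edge star is a connected
nongraphic hyperplane of the frame matroid. -/
def BiasedGraph.IsCommitted {V E : Type*} (Ω : BiasedGraph V E) (M : Matroid E) (x : V) : Prop :=
  MHyperplane M (Ω.toMultigraph.deltaPlus x)ᶜ ∧
    MatroidConnected (M ↾ (Ω.toMultigraph.deltaPlus x)ᶜ) ∧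
    ¬ IsGraphic (M ↾ (Ω.toMultigraph.deltaPlus x)ᶜ)

/-- `Ω'` is a roll-up of `Ω` at the balancing vertex `u`: some (possibly empty)
unbalancing class of links at `u` is replaced by unbalanced loops at their other endpoints. -/
def BiasedGraph.IsRollUpOf {V E : Type*} (Ω' Ω : BiasedGraph V E) (u : V) : Prop :=
  ∃ S : Set E, (S = ∅ ∨ Ω.IsUnbalancingClass u S) ∧
    (∀ e ∉ S, Ω'.inc e = Ω.inc e) ∧
    (∀ e ∈ S, ∃ w, w ≠ u ∧ Ω.inc e = s(u, w) ∧ Ω'.inc e = s(w, w)) ∧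
    (∀ C, Ω'.Balanced C ↔ (Ω.Balanced C ∧ C ∩ S = ∅))

/-!
Pinching sends every edge at `v` to `u`, and a cycle of the pinched graph is unbalanced exactly
when it uses edges of `G` at both `u` and `v`. So the cycles of `G` missing `u` or `v` are
exactly the balanced cycles, and the unbalanced cycles are exactly the `u`–`v` paths of `G`:
unpinching `u` opens such a cycle into a path. A cycle of `G` through `u` and `v` is the union of
two internally disjoint `u`–`v` paths, i.e. a tight handcuff at `u`. Loose handcuffs cannot occur
since every unbalanced cycle passes through `u`, and contrabalanced thetas cannot occur since
their three cycles would be `u`–`v` paths pairwise formed from three disjoint edge sets, while a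
`u`–`v` path has exactly one edge at `u`.
-/

theorem List.nodup_cons_append_cons_iff {α : Type*} {x y : α} {m₁ m₂ : List α} (hxy : x ≠ y) :
    (x :: m₁ ++ y :: m₂).Nodup ↔ (x :: m₁ ++ [y]).Nodup ∧ (y :: m₂ ++ [x]).Nodup ∧
      ∀ z ∈ x :: m₁ ++ [y], z ∈ y :: m₂ ++ [x] → z = x ∨ z = y := by
  simp only [List.cons_append, List.nodup_cons, List.nodup_append, List.mem_append, List.mem_cons,
    List.not_mem_nil]
  grind

namespace Multigraph

variable {V : Type u} {W : Type*} {E : Type v} {G : Multigraph V E} {x y z : V}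

namespace Walk

def append : {x y z : V} → G.Walk x y → G.Walk y z → G.Walk x z
  | _, _, _, .nil _, q => q
  | _, _, _, .cons e h t, q => .cons e h (t.append q)

def reverse : {x y : V} → G.Walk x y → G.Walk y x
  | _, _, .nil a => .nil a
  | x, _, .cons e h t => t.reverse.append (.cons e (h.trans Sym2.eq_swap) (.nil x))

theorem vertList_ne_nil (w : G.Walk x y) : w.vertList ≠ [] := by
  cases w <;> simp [vertList]

theorem exists_vertList_eq_cons (w : G.Walk x y) : ∃ l, w.vertList = x :: l := by
  cases w with
  | nil => exact ⟨[], rfl⟩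
  | cons e h t => exact ⟨t.vertList, rfl⟩

theorem start_mem_vertList (w : G.Walk x y) : x ∈ w.vertList := by
  obtain ⟨l, hl⟩ := w.exists_vertList_eq_cons
  simp [hl]

theorem exists_vertList_eq_concat (w : G.Walk x y) : ∃ l, w.vertList = l ++ [y] := by
  induction w with
  | nil a => exact ⟨[], rfl⟩
  | @cons x₀ _ _ _ _ _ ih =>
    obtain ⟨l, hl⟩ := ih
    exact ⟨x₀ :: l, by simp [vertList, hl]⟩

theorem exists_vertList_eq_cons_concat (w : G.Walk x y) (hw : w.edgeList ≠ []) :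
    ∃ m, w.vertList = x :: m ++ [y] := by
  cases w with
  | nil => simp [edgeList] at hw
  | cons e h t =>
    obtain ⟨m, hm⟩ := t.exists_vertList_eq_concat
    exact ⟨m, by simp [vertList, hm]⟩

theorem edgeList_ne_nil_of_ne (w : G.Walk x y) (hxy : x ≠ y) : w.edgeList ≠ [] := by
  cases w with
  | nil => exact absurd rfl hxy
  | cons => simp [edgeList]

theorem mem_vertList_of_mem_inc (w : G.Walk x y) {e : E} (he : e ∈ w.edgeList)
    (hz : z ∈ G.inc e) : z ∈ w.vertList := by
  induction w with
  | nil a => simp [edgeList] at he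
  | cons e' h t ih =>
    rw [edgeList, List.mem_cons] at he
    rcases he with rfl | he
    · rw [h, Sym2.mem_iff] at hz
      rcases hz with rfl | rfl
      · exact List.mem_cons_self ..
      · exact List.mem_cons_of_mem _ t.start_mem_vertList
    · exact List.mem_cons_of_mem _ (ih he)

theorem exists_mem_inc_of_mem_vertList (w : G.Walk x y) (hw : w.edgeList ≠ [])
    (hz : z ∈ w.vertList) : ∃ e ∈ w.edgeList, z ∈ G.inc e := by
  induction w with
  | nil a => simp [edgeList] at hw
  | cons e h t ih =>
    rw [vertList, List.mem_cons] at hz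
    rcases hz with rfl | hz
    · exact ⟨e, List.mem_cons_self .., by simp [h]⟩
    · cases t with
      | nil =>
        rw [vertList, List.mem_singleton] at hz
        exact ⟨e, List.mem_cons_self .., by simp [h, hz]⟩
      | cons =>
        obtain ⟨g, hg, hzg⟩ := ih (by simp [edgeList]) hz
        exact ⟨g, List.mem_cons_of_mem _ hg, hzg⟩

theorem vSet_edgeSet (w : G.Walk x y) (hw : w.edgeList ≠ []) :
    G.VSet w.edgeSet = {z | z ∈ w.vertList} := by
  ext z
  exact ⟨fun ⟨_, he, hz⟩ => w.mem_vertList_of_mem_inc he hz,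
    w.exists_mem_inc_of_mem_vertList hw⟩

theorem edgeList_append (p : G.Walk x y) (q : G.Walk y z) :
    (p.append q).edgeList = p.edgeList ++ q.edgeList := by
  induction p with
  | nil a => rfl
  | cons e h t ih => simp [append, edgeList, ih]

theorem vertList_append (p : G.Walk x y) (q : G.Walk y z) :
    (p.append q).vertList = p.vertList.dropLast ++ q.vertList := by
  induction p with
  | nil a => simp [append, vertList]
  | cons e h t ih =>
    simp [append, vertList, ih, List.dropLast_cons_of_ne_nil t.vertList_ne_nil]

theorem dropLast_vertList_append (p : G.Walk x y) (q : G.Walk y z) :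
    (p.append q).vertList.dropLast = p.vertList.dropLast ++ q.vertList.dropLast := by
  rw [vertList_append, List.dropLast_append_of_ne_nil q.vertList_ne_nil]

theorem edgeSet_append (p : G.Walk x y) (q : G.Walk y z) :
    (p.append q).edgeSet = p.edgeSet ∪ q.edgeSet := by
  ext e
  simp [edgeSet, edgeList_append]

theorem edgeList_reverse (w : G.Walk x y) : w.reverse.edgeList = w.edgeList.reverse := by
  induction w with
  | nil a => rfl
  | cons e h t ih => simp [reverse, edgeList_append, edgeList, ih]

theorem vertList_reverse (w : G.Walk x y) : w.reverse.vertList = w.vertList.reverse := by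
  induction w with
  | nil a => rfl
  | cons e h t ih =>
    obtain ⟨l, hl⟩ := t.exists_vertList_eq_cons
    simp [reverse, vertList_append, vertList, ih, hl]

theorem edgeSet_reverse (w : G.Walk x y) : w.reverse.edgeSet = w.edgeSet := by
  ext e
  simp [edgeSet, edgeList_reverse]

theorem IsPath.reverse {w : G.Walk x y} (hw : w.IsPath) : w.reverse.IsPath := by
  rw [IsPath, vertList_reverse, List.nodup_reverse]
  exact hw

theorem IsPath.edgeList_nodup {w : G.Walk x y} (hw : w.IsPath) : w.edgeList.Nodup := by
  induction w with
  | nil a => simp [edgeList]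
  | cons e h t ih =>
    rw [IsPath, vertList, List.nodup_cons] at hw
    exact List.nodup_cons.2
      ⟨fun he => hw.1 (t.mem_vertList_of_mem_inc he (by simp [h])), ih hw.2⟩

theorem exists_eq_append (w : G.Walk x y) (hz : z ∈ w.vertList) :
    ∃ (w₁ : G.Walk x z) (w₂ : G.Walk z y), w = w₁.append w₂ := by
  induction w with
  | nil a =>
    rw [vertList, List.mem_singleton] at hz
    subst hz
    exact ⟨.nil _, .nil _, rfl⟩
  | cons e h t ih =>
    rw [vertList, List.mem_cons] at hz
    rcases hz with rfl | hz
    · exact ⟨.nil _, .cons e h t, rfl⟩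
    · obtain ⟨w₁, w₂, rfl⟩ := ih hz
      exact ⟨.cons e h w₁, w₂, rfl⟩

theorem IsCycle.exists_rotate {w : G.Walk x x} (hw : w.IsCycle) (hz : z ∈ w.vertList) :
    ∃ w' : G.Walk z z, w'.IsCycle ∧ w'.edgeSet = w.edgeSet := by
  obtain ⟨w₁, w₂, rfl⟩ := w.exists_eq_append hz
  obtain ⟨hne, hnd, hvnd⟩ := hw
  rw [edgeList_append] at hne hnd
  rw [dropLast_vertList_append] at hvnd
  refine ⟨w₂.append w₁, ⟨?_, ?_, ?_⟩, by rw [edgeSet_append, edgeSet_append, Set.union_comm]⟩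
  · simp only [edgeList_append, ne_eq, List.append_eq_nil_iff] at hne ⊢
    tauto
  · rwa [edgeList_append, List.nodup_append_comm]
  · rwa [dropLast_vertList_append, List.nodup_append_comm]

theorem isCycle_append_iff (w₁ : G.Walk x y) (w₂ : G.Walk y x) (hxy : x ≠ y) :
    (w₁.append w₂).IsCycle ↔ w₁.IsPath ∧ w₂.IsPath ∧ List.Disjoint w₁.edgeList w₂.edgeList ∧
      {z | z ∈ w₁.vertList} ∩ {z | z ∈ w₂.vertList} ⊆ {x, y} := by
  obtain ⟨m₁, hm₁⟩ := w₁.exists_vertList_eq_cons_concat (w₁.edgeList_ne_nil_of_ne hxy)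
  obtain ⟨m₂, hm₂⟩ := w₂.exists_vertList_eq_cons_concat (w₂.edgeList_ne_nil_of_ne hxy.symm)
  have hverts : (w₁.append w₂).vertList.dropLast = x :: m₁ ++ y :: m₂ := by
    rw [dropLast_vertList_append, hm₁, hm₂, List.dropLast_concat, List.dropLast_concat]
  have hne : (w₁.append w₂).edgeList ≠ [] := by
    simp [edgeList_append, w₁.edgeList_ne_nil_of_ne hxy]
  unfold IsCycle IsPath
  rw [hverts, List.nodup_cons_append_cons_iff hxy, edgeList_append, List.nodup_append, hm₁, hm₂,
    ← edgeList_append]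
  constructor
  · rintro ⟨-, ⟨-, -, hdisj⟩, hP₁, hP₂, hV⟩
    exact ⟨hP₁, hP₂, fun e h₁ h₂ => hdisj e h₁ e h₂ rfl, fun z ⟨h₁, h₂⟩ => hV z h₁ h₂⟩
  · rintro ⟨hP₁, hP₂, hdisj, hV⟩
    have hE₁ := IsPath.edgeList_nodup (w := w₁) (by rwa [IsPath, hm₁])
    have hE₂ := IsPath.edgeList_nodup (w := w₂) (by rwa [IsPath, hm₂])
    exact ⟨hne, ⟨hE₁, hE₂, fun a ha b hb hab => hdisj ha (hab ▸ hb)⟩, hP₁, hP₂,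
      fun z h₁ h₂ => hV ⟨h₁, h₂⟩⟩

theorem exists_map {G' : Multigraph W E} {g : V → W} (w : G.Walk x y)
    (h : ∀ e ∈ w.edgeList, G'.inc e = (G.inc e).map g) {x' y' : W} (hx : g x = x')
    (hy : g y = y') :
    ∃ w' : G'.Walk x' y', w'.edgeList = w.edgeList ∧ w'.vertList = w.vertList.map g := by
  subst hx hy
  induction w with
  | nil a => exact ⟨.nil _, rfl, rfl⟩
  | @cons a b _ e he t ih =>
    obtain ⟨t', hE, hV⟩ := ih fun e' he' => h e' (List.mem_cons_of_mem _ he')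
    have hinc : G'.inc e = s(g a, g b) := by rw [h e (List.mem_cons_self ..), he, Sym2.map_mk]
    exact ⟨.cons e hinc t', by simp [edgeList, hE], by simp [vertList, hV]⟩

theorem exists_lift {G' : Multigraph W E} {f : V → W} {p q : W} (w : G'.Walk p q)
    (hG : ∀ e ∈ w.edgeList, G'.inc e = (G.inc e).map f) (hne : w.edgeList ≠ [])
    (hinj : ∀ z ∈ w.vertList.tail.dropLast, ∀ a b, f a = z → f b = z → a = b) :
    ∃ (a b : V) (w' : G.Walk a b), f a = p ∧ f b = q ∧ w'.edgeList = w.edgeList ∧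
      w'.vertList.map f = w.vertList := by
  induction w with
  | nil => exact absurd rfl hne
  | @cons x₀ y₀ _ e h t ih =>
    obtain ⟨c, d, hcd, hc, hd⟩ : ∃ c d, G.inc e = s(c, d) ∧ f c = x₀ ∧ f d = y₀ := by
      induction hG' : G.inc e using Sym2.ind with
      | _ c d =>
        rcases Sym2.eq_iff.1 (show s(f c, f d) = s(x₀, y₀) by
          rw [← h, hG e (List.mem_cons_self ..), hG', Sym2.map_mk]) with ⟨h₁, h₂⟩ | ⟨h₁, h₂⟩
        · exact ⟨c, d, rfl, h₁, h₂⟩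
        · exact ⟨d, c, Sym2.eq_swap, h₂, h₁⟩
    cases t with
    | nil => exact ⟨c, d, .cons e hcd (.nil d), hc, hd, rfl, by simp [vertList, hc, hd]⟩
    | cons e₂ h₂ t₂ =>
      simp only [vertList, List.tail_cons, List.dropLast_cons_of_ne_nil t₂.vertList_ne_nil,
        List.forall_mem_cons] at hinj ih
      obtain ⟨a, b, t', ha, hb, hE, hV⟩ :=
        ih (fun e' he' => hG e' (List.mem_cons_of_mem _ he')) (by simp [edgeList]) hinj.2
      obtain rfl := hinj.1 d a hd ha
      exact ⟨c, b, .cons e hcd t', hc, hb, by simp [edgeList, hE], by simp [vertList, hV, hc]⟩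

end Walk

theorem vSet_mono {X Y : Set E} (h : X ⊆ Y) : G.VSet X ⊆ G.VSet Y :=
  fun _ ⟨e, he, hz⟩ => ⟨e, h he, hz⟩

theorem IsPathSet.start_mem_vSet {P : Set E} (hP : G.IsPathSet x y P) (hxy : x ≠ y) :
    x ∈ G.VSet P := by
  obtain ⟨w, -, rfl⟩ := hP
  rw [w.vSet_edgeSet (w.edgeList_ne_nil_of_ne hxy)]
  exact w.start_mem_vertList

theorem IsPathSet.end_mem_vSet {P : Set E} (hP : G.IsPathSet x y P) (hxy : x ≠ y) :
    y ∈ G.VSet P := by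
  obtain ⟨w, hw, rfl⟩ := hP
  simpa [Walk.edgeSet_reverse] using
    IsPathSet.start_mem_vSet ⟨w.reverse, hw.reverse, rfl⟩ hxy.symm

theorem IsCycleSet.exists_isCycle_start {C : Set E} (hC : G.IsCycleSet C) (hz : z ∈ G.VSet C) :
    ∃ w : G.Walk z z, w.IsCycle ∧ w.edgeSet = C := by
  obtain ⟨p, w, hw, rfl⟩ := hC
  obtain ⟨e, he, hze⟩ := hz
  exact hw.exists_rotate (w.mem_vertList_of_mem_inc he hze)

theorem isCycleSet_union_of_isPathSet {P Q : Set E} (hxy : x ≠ y) (hP : G.IsPathSet x y P)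
    (hQ : G.IsPathSet x y Q) (hPQ : Disjoint P Q) (hV : G.VSet P ∩ G.VSet Q ⊆ {x, y}) :
    G.IsCycleSet (P ∪ Q) := by
  obtain ⟨w₁, hw₁, rfl⟩ := hP
  obtain ⟨w₂, hw₂, rfl⟩ := hQ
  rw [w₁.vSet_edgeSet (w₁.edgeList_ne_nil_of_ne hxy),
    w₂.vSet_edgeSet (w₂.edgeList_ne_nil_of_ne hxy)] at hV
  refine ⟨x, w₁.append w₂.reverse, (w₁.isCycle_append_iff w₂.reverse hxy).2
    ⟨hw₁, hw₂.reverse, fun e h₁ h₂ => ?_, by simpa [Walk.vertList_reverse] using hV⟩,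
    by rw [Walk.edgeSet_append, Walk.edgeSet_reverse]⟩
  rw [Walk.edgeList_reverse, List.mem_reverse] at h₂
  exact Set.disjoint_left.1 hPQ h₁ h₂

theorem IsCycleSet.exists_isPathSet {C : Set E} (hC : G.IsCycleSet C) (hxy : x ≠ y)
    (hx : x ∈ G.VSet C) (hy : y ∈ G.VSet C) :
    ∃ P Q, G.IsPathSet x y P ∧ G.IsPathSet x y Q ∧ Disjoint P Q ∧
      G.VSet P ∩ G.VSet Q ⊆ {x, y} ∧ C = P ∪ Q := by
  obtain ⟨c, hc, rfl⟩ := hC.exists_isCycle_start hx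
  rw [c.vSet_edgeSet hc.1] at hy
  obtain ⟨w₁, w₂, rfl⟩ := c.exists_eq_append hy
  obtain ⟨hw₁, hw₂, hdisj, hV⟩ := (w₁.isCycle_append_iff w₂ hxy).1 hc
  refine ⟨w₁.edgeSet, w₂.reverse.edgeSet, ⟨w₁, hw₁, rfl⟩, ⟨_, hw₂.reverse, rfl⟩, ?_, ?_,
    by rw [Walk.edgeSet_append, Walk.edgeSet_reverse]⟩
  · rw [Walk.edgeSet_reverse, Set.disjoint_left]
    exact fun e h₁ h₂ => hdisj h₁ h₂
  · rw [w₁.vSet_edgeSet (w₁.edgeList_ne_nil_of_ne hxy),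
      w₂.reverse.vSet_edgeSet (w₂.reverse.edgeList_ne_nil_of_ne hxy)]
    simpa [Walk.vertList_reverse] using hV

theorem IsPathSet.encard_inter_deltaPlus {P : Set E} (hP : G.IsPathSet x y P) (hxy : x ≠ y) :
    (P ∩ G.deltaPlus x).encard = 1 := by
  obtain ⟨w, hw, rfl⟩ := hP
  cases w with
  | nil => exact absurd rfl hxy
  | cons e h t =>
    refine Set.encard_eq_one.2 ⟨e, Set.ext fun f => ⟨fun ⟨hf, hxf⟩ => ?_, ?_⟩⟩
    · rcases List.mem_cons.1 hf with rfl | hf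
      · rfl
      · exact absurd (t.mem_vertList_of_mem_inc hf hxf) (List.nodup_cons.1 hw).1
    · rintro rfl
      exact ⟨List.mem_cons_self .., by simp [deltaPlus, h]⟩

theorem not_isPathSet_union_of_pairwiseDisjoint {P₁ P₂ P₃ : Set E} (hxy : x ≠ y)
    (h₁₂ : Disjoint P₁ P₂) (h₂₃ : Disjoint P₂ P₃) (h₁₃ : Disjoint P₁ P₃)
    (hP₁₂ : G.IsPathSet x y (P₁ ∪ P₂)) (hP₂₃ : G.IsPathSet x y (P₂ ∪ P₃))
    (hP₁₃ : G.IsPathSet x y (P₁ ∪ P₃)) : False := by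
  have hdeg : ∀ {A B : Set E}, Disjoint A B → G.IsPathSet x y (A ∪ B) →
      (A ∩ G.deltaPlus x).encard + (B ∩ G.deltaPlus x).encard = 1 := fun hAB hP => by
    rw [← Set.encard_union_eq (hAB.mono Set.inter_subset_left Set.inter_subset_left),
      ← Set.union_inter_distrib_right]
    exact hP.encard_inter_deltaPlus hxy
  have h₁ := hdeg h₁₂ hP₁₂
  have h₂ := hdeg h₂₃ hP₂₃
  have h₃ := hdeg h₁₃ hP₁₃
  generalize (P₁ ∩ G.deltaPlus x).encard = a at *
  generalize (P₂ ∩ G.deltaPlus x).encard = b at *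
  generalize (P₃ ∩ G.deltaPlus x).encard = c at *
  induction a <;> induction b <;> induction c <;> simp_all
  norm_cast at *
  omega

theorem IsCycleSet.of_inc_eq_map {G' : Multigraph W E} {g : V → W} (hg : Function.Injective g)
    {C : Set E} (hC : G.IsCycleSet C) (h : ∀ e ∈ C, G'.inc e = (G.inc e).map g) :
    G'.IsCycleSet C := by
  obtain ⟨p, w, ⟨hne, hnd, hvnd⟩, rfl⟩ := hC
  obtain ⟨w', hE, hV⟩ := w.exists_map h rfl rfl
  refine ⟨g p, w', ⟨hE ▸ hne, hE ▸ hnd, ?_⟩, by simp [Walk.edgeSet, hE]⟩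
  rw [hV, ← List.map_dropLast]
  exact hvnd.map hg

def map (G : Multigraph V E) (f : V → W) : Multigraph W E where
  inc e := (G.inc e).map f

theorem vSet_map (G : Multigraph V E) (f : V → W) (X : Set E) :
    (G.map f).VSet X = f '' G.VSet X := by
  ext z
  simp only [VSet, map, Sym2.mem_map, Set.mem_ofPred_eq, Set.mem_image]
  aesop

section Pinch

variable [DecidableEq V] {u v : V}

-- The vertex obtained by identifying `u` and `v` keeps the name `u`.
def pinchMap (u v : V) (x : V) : V := if x = v then u else x

def pinch (G : Multigraph V E) (u v : V) : Multigraph V E := G.map (pinchMap u v)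

theorem pinchMap_right : pinchMap u v v = u := if_pos rfl

theorem pinchMap_of_ne (h : x ≠ v) : pinchMap u v x = x := if_neg h

theorem pinchMap_eq_left_iff (huv : u ≠ v) : pinchMap u v x = u ↔ x = u ∨ x = v := by
  unfold pinchMap
  split_ifs with h <;> simp [h, huv.symm]

theorem eq_of_pinchMap_eq (hx : x ≠ u) {a : V} (h : pinchMap u v a = x) : a = x := by
  unfold pinchMap at h
  split_ifs at h
  · exact absurd h.symm hx
  · exact h

theorem pinchMap_image_inter_subset_iff (huv : u ≠ v) {A B : Set V} :
    pinchMap u v '' A ∩ pinchMap u v '' B ⊆ {u} ↔ A ∩ B ⊆ {u, v} := by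
  constructor
  · intro h z hz
    exact (pinchMap_eq_left_iff huv).1 (h ⟨⟨z, hz.1, rfl⟩, ⟨z, hz.2, rfl⟩⟩)
  · rintro h _ ⟨⟨a, ha, rfl⟩, ⟨b, hb, hab⟩⟩
    by_contra hne
    have hne' : pinchMap u v a ≠ u := hne
    obtain rfl : b = a := (eq_of_pinchMap_eq hne' hab).trans (eq_of_pinchMap_eq hne' rfl).symm
    exact hne' ((pinchMap_eq_left_iff huv).2 (h ⟨ha, hb⟩))

theorem mem_image_pinchMap (huv : u ≠ v) {A : Set V} (hu : u ∈ A) : u ∈ pinchMap u v '' A :=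
  ⟨u, hu, pinchMap_of_ne huv⟩

theorem map_pinchMap_of_notMem_right {s : Sym2 V} (hv : v ∉ s) : s.map (pinchMap u v) = s :=
  (Sym2.map_congr (g := fun x => x) fun _ hx => pinchMap_of_ne
    (ne_of_mem_of_not_mem hx hv)).trans (congrFun Sym2.map_id' s)

theorem map_pinchMap_of_notMem_left {s : Sym2 V} (hu : u ∉ s) :
    s.map (pinchMap u v) = s.map (Equiv.swap u v) := by
  refine Sym2.map_congr fun x hx => ?_
  have hxu : x ≠ u := ne_of_mem_of_not_mem hx hu
  by_cases hxv : x = v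
  · rw [hxv, pinchMap_right, Equiv.swap_apply_right]
  · rw [pinchMap_of_ne hxv, Equiv.swap_apply_of_ne_of_ne hxu hxv]

theorem pinch_isCycleSet_iff {C : Set E} (hC : ¬(u ∈ G.VSet C ∧ v ∈ G.VSet C)) :
    (G.pinch u v).IsCycleSet C ↔ G.IsCycleSet C := by
  rcases not_and_or.1 hC with hu | hv
  · have hswap : ∀ e ∈ C, (G.pinch u v).inc e = (G.inc e).map (Equiv.swap u v) :=
      fun e he => map_pinchMap_of_notMem_left fun h => hu ⟨e, he, h⟩
    refine ⟨fun h => h.of_inc_eq_map (Equiv.swap u v).injective fun e he => ?_,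
      fun h => h.of_inc_eq_map (Equiv.swap u v).injective hswap⟩
    rw [hswap e he, Sym2.map_map]
    simp
  · have hid : ∀ e ∈ C, (G.pinch u v).inc e = (G.inc e).map id :=
      fun e he => by rw [Sym2.map_id]; exact map_pinchMap_of_notMem_right fun h => hv ⟨e, he, h⟩
    refine ⟨fun h => h.of_inc_eq_map Function.injective_id fun e he => ?_,
      fun h => h.of_inc_eq_map Function.injective_id hid⟩
    rw [hid e he, Sym2.map_id]
    rfl

theorem IsPathSet.isCycleSet_pinch (huv : u ≠ v) {P : Set E} (hP : G.IsPathSet u v P) :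
    (G.pinch u v).IsCycleSet P := by
  obtain ⟨w, hw, rfl⟩ := hP
  obtain ⟨m, hm⟩ := w.exists_vertList_eq_cons_concat (w.edgeList_ne_nil_of_ne huv)
  obtain ⟨w', hE, hV⟩ := w.exists_map (G' := G.pinch u v) (fun _ _ => rfl)
    (pinchMap_of_ne huv) pinchMap_right
  have hnd := hw
  rw [Walk.IsPath, hm, List.nodup_append] at hnd
  have hfix : (u :: m).map (pinchMap u v) = u :: m :=
    (List.map_congr_left (f := pinchMap u v) (g := id) fun z hz =>
      pinchMap_of_ne (hnd.2.2 z hz v (List.mem_singleton_self v))).trans (List.map_id _)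
  refine ⟨u, w', ⟨hE ▸ w.edgeList_ne_nil_of_ne huv, hE ▸ hw.edgeList_nodup, ?_⟩,
    by simp [Walk.edgeSet, hE]⟩
  rw [hV, hm, List.map_append, List.map_singleton, pinchMap_right, List.dropLast_concat, hfix]
  exact hnd.1

-- Lifting the cycle, rotated to start at `u`, gives a walk of `G` that is a path since its only
-- repeated image is `u`, and whose ends lie in the preimage `{u, v}` of `u` and so are `u` and `v`.
theorem IsCycleSet.isPathSet_of_pinch (huv : u ≠ v) {C : Set E} (hC : (G.pinch u v).IsCycleSet C)
    (hu : u ∈ G.VSet C) (hv : v ∈ G.VSet C) : G.IsPathSet u v C := by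
  have hu' : u ∈ (G.pinch u v).VSet C := by
    rw [pinch, vSet_map]
    exact mem_image_pinchMap huv hu
  obtain ⟨c, hc, rfl⟩ := hC.exists_isCycle_start hu'
  obtain ⟨m', hm'⟩ := c.exists_vertList_eq_cons_concat hc.1
  have hnd := hc.2.2
  rw [hm', List.dropLast_concat] at hnd
  obtain ⟨a, b, w, ha, hb, hE, hV⟩ := c.exists_lift (fun _ _ => rfl) hc.1 fun z hz a b hza hzb => by
    have hzu : z ≠ u := by
      rintro rfl
      simp only [hm', List.cons_append, List.tail_cons, List.dropLast_concat] at hz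
      exact (List.nodup_cons.1 hnd).1 hz
    exact (eq_of_pinchMap_eq hzu hza).trans (eq_of_pinchMap_eq hzu hzb).symm
  have hset : w.edgeSet = c.edgeSet := by simp [Walk.edgeSet, hE]
  obtain ⟨m, hm⟩ := w.exists_vertList_eq_cons_concat (hE ▸ hc.1)
  rw [hm, hm', List.map_append, List.map_cons, List.map_singleton, ha, hb] at hV
  have hmm' : m.map (pinchMap u v) = m' := by simpa using hV
  have hm_ne : ∀ z ∈ m, ¬(z = u ∨ z = v) := fun z hz h => by
    have hz' := List.mem_map_of_mem (f := pinchMap u v) hz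
    rw [hmm', (pinchMap_eq_left_iff huv).2 h] at hz'
    exact (List.nodup_cons.1 hnd).1 hz'
  rw [← hset, w.vSet_edgeSet (hE ▸ hc.1), hm] at hu hv
  have ha' := (pinchMap_eq_left_iff huv).1 ha
  have hb' := (pinchMap_eq_left_iff huv).1 hb
  simp only [Set.mem_ofPred_eq, List.cons_append, List.mem_cons, List.mem_append] at hu hv
  have hpath : w.IsPath := by
    rw [Walk.IsPath, hm]
    have := (List.nodup_cons.1 (hmm' ▸ hnd)).2.of_map
    grind
  obtain ⟨rfl, rfl⟩ | ⟨rfl, rfl⟩ : (a = u ∧ b = v) ∨ (a = v ∧ b = u) := by grind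
  · exact ⟨w, hpath, hset⟩
  · exact ⟨w.reverse, hpath.reverse, by rw [Walk.edgeSet_reverse, hset]⟩

end Pinch

end Multigraph

namespace BiasedGraph

open Multigraph

variable {V : Type u} {E : Type v} [DecidableEq V]

structure IsPinchOf (Ω : BiasedGraph V E) (G : Multigraph V E) (u v : V) : Prop where
  toMultigraph_eq : Ω.toMultigraph = G.pinch u v
  balanced_iff : ∀ C, Ω.Balanced C ↔
    Ω.toMultigraph.IsCycleSet C ∧ ¬(u ∈ G.VSet C ∧ v ∈ G.VSet C)

namespace IsPinchOf

variable {Ω : BiasedGraph V E} {G : Multigraph V E} {u v : V} {C : Set E}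

theorem vSet_eq (h : Ω.IsPinchOf G u v) (X : Set E) :
    Ω.toMultigraph.VSet X = pinchMap u v '' G.VSet X := by
  rw [h.toMultigraph_eq]
  exact G.vSet_map _ X

theorem balanced_iff_isCycleSet (h : Ω.IsPinchOf G u v) :
    Ω.Balanced C ↔ G.IsCycleSet C ∧ ¬(u ∈ G.VSet C ∧ v ∈ G.VSet C) := by
  rw [h.balanced_iff, h.toMultigraph_eq]
  exact ⟨fun ⟨hC, hn⟩ => ⟨(pinch_isCycleSet_iff hn).1 hC, hn⟩,
    fun ⟨hC, hn⟩ => ⟨(pinch_isCycleSet_iff hn).2 hC, hn⟩⟩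

theorem isUnbalancedCycle_iff (h : Ω.IsPinchOf G u v) (huv : u ≠ v) :
    Ω.IsUnbalancedCycle C ↔ G.IsPathSet u v C := by
  rw [IsUnbalancedCycle, h.balanced_iff, h.toMultigraph_eq]
  constructor
  · rintro ⟨hC, hn⟩
    obtain ⟨hu, hv⟩ := not_not.1 (not_and.1 hn hC)
    exact hC.isPathSet_of_pinch huv hu hv
  · intro hP
    exact ⟨hP.isCycleSet_pinch huv,
      fun ⟨_, hn⟩ => hn ⟨hP.start_mem_vSet huv, hP.end_mem_vSet huv⟩⟩

theorem mem_vSet_of_isUnbalancedCycle (h : Ω.IsPinchOf G u v) (huv : u ≠ v)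
    (hC : Ω.IsUnbalancedCycle C) : u ∈ Ω.toMultigraph.VSet C := by
  rw [h.vSet_eq]
  exact mem_image_pinchMap huv (((h.isUnbalancedCycle_iff huv).1 hC).start_mem_vSet huv)

theorem not_isLooseHandcuff (h : Ω.IsPinchOf G u v) (huv : u ≠ v) : ¬ Ω.IsLooseHandcuff C := by
  rintro ⟨C₁, C₂, -, -, -, hC₁, hC₂, hdisj, -⟩
  exact Set.disjoint_left.1 hdisj (h.mem_vSet_of_isUnbalancedCycle huv hC₁)
    (h.mem_vSet_of_isUnbalancedCycle huv hC₂)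

theorem not_isContraTheta (h : Ω.IsPinchOf G u v) (huv : u ≠ v) : ¬ Ω.IsContraTheta C := by
  rintro ⟨x, y, P₁, P₂, P₃, ⟨hxy, hP₁, hP₂, hP₃, h₁₂, h₂₃, h₁₃, hV₁₂, hV₂₃, hV₁₃⟩,
    hn₁₂, hn₂₃, hn₁₃, -⟩
  have hpath : ∀ {P Q}, Ω.toMultigraph.IsPathSet x y P → Ω.toMultigraph.IsPathSet x y Q →
      Disjoint P Q → Ω.toMultigraph.VSet P ∩ Ω.toMultigraph.VSet Q ⊆ {x, y} →
      ¬ Ω.Balanced (P ∪ Q) → G.IsPathSet u v (P ∪ Q) := fun hP hQ hPQ hV hn =>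
    (h.isUnbalancedCycle_iff huv).1 ⟨isCycleSet_union_of_isPathSet hxy hP hQ hPQ hV, hn⟩
  exact not_isPathSet_union_of_pairwiseDisjoint huv h₁₂ h₂₃ h₁₃
    (hpath hP₁ hP₂ h₁₂ hV₁₂ hn₁₂) (hpath hP₂ hP₃ h₂₃ hV₂₃ hn₂₃) (hpath hP₁ hP₃ h₁₃ hV₁₃ hn₁₃)

theorem isTightHandcuff_iff (h : Ω.IsPinchOf G u v) (huv : u ≠ v) :
    Ω.IsTightHandcuff C ↔ G.IsCycleSet C ∧ u ∈ G.VSet C ∧ v ∈ G.VSet C := by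
  simp only [IsTightHandcuff, h.isUnbalancedCycle_iff huv, h.vSet_eq]
  constructor
  · rintro ⟨C₁, C₂, hC₁, hC₂, hdisj, ⟨x, hx⟩, rfl⟩
    have hu : u ∈ pinchMap u v '' G.VSet C₁ ∩ pinchMap u v '' G.VSet C₂ :=
      ⟨mem_image_pinchMap huv (hC₁.start_mem_vSet huv),
        mem_image_pinchMap huv (hC₂.start_mem_vSet huv)⟩
    obtain rfl : u = x := by rwa [hx] at hu
    exact ⟨isCycleSet_union_of_isPathSet huv hC₁ hC₂ hdisj
        ((pinchMap_image_inter_subset_iff huv).1 hx.subset),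
      vSet_mono Set.subset_union_left (hC₁.start_mem_vSet huv),
      vSet_mono Set.subset_union_left (hC₁.end_mem_vSet huv)⟩
  · rintro ⟨hC, hu, hv⟩
    obtain ⟨P, Q, hP, hQ, hPQ, hV, rfl⟩ := hC.exists_isPathSet huv hu hv
    refine ⟨P, Q, hP, hQ, hPQ, ⟨u, ((pinchMap_image_inter_subset_iff huv).2 hV).antisymm ?_⟩, rfl⟩
    exact Set.singleton_subset_iff.2 ⟨mem_image_pinchMap huv (hP.start_mem_vSet huv),
      mem_image_pinchMap huv (hQ.start_mem_vSet huv)⟩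

theorem frameCircuit_iff (h : Ω.IsPinchOf G u v) (huv : u ≠ v) :
    Ω.FrameCircuit C ↔ G.IsCycleSet C := by
  rw [FrameCircuit, and_iff_right_of_imp (Ω.balanced_isCycle C), h.balanced_iff_isCycleSet,
    h.isTightHandcuff_iff huv]
  simp only [h.not_isLooseHandcuff huv, h.not_isContraTheta huv, or_false]
  tauto

end IsPinchOf

end BiasedGraph

/-- Pinching two vertices of a graph yields a biased graph whose frame
matroid is the cycle matroid of the original graph. -/
theorem stmt7 {V E : Type*} [DecidableEq V] (G : Multigraph V E) (u v : V) (huv : u ≠ v)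
    (Ω' : BiasedGraph V E)
    (hinc : ∀ e, Ω'.inc e = Sym2.map (fun x => if x = v then u else x) (G.inc e))
    (hbal : ∀ C, Ω'.Balanced C ↔ (Ω'.toMultigraph.IsCycleSet C ∧
      ¬ ((∃ e ∈ C, u ∈ G.inc e) ∧ (∃ e ∈ C, v ∈ G.inc e)))) :
    ∀ C, Ω'.FrameCircuit C ↔ G.IsCycleSet C :=
  fun _ => (BiasedGraph.IsPinchOf.mk (congrArg Multigraph.mk (funext hinc)) hbal).frameCircuit_iff
    huv
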